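/- For smooth exponentially concave φ with portfolio π, written in exponential coordinates, the partial derivatives of f(θ) = φ(θ) + ψ(θ) satisfy ∂f/∂θᵢ = πᵢ(θ) for i = 1, …, n−1. -/

import Mathlib

open Real Finset

/-- The open unit simplex in ℝⁿ. -/
def openSimplex (n : ℕ) : Set (Fin n → ℝ) :=
  {p | (∀ i, 0 < p i) ∧ ∑ i, p i = 1}

/-- `ψ(x) = log(1 + Σ e^{xᵢ})`. -/
noncomputable def psiFun {n : ℕ} (x : Fin n → ℝ) : ℝ :=
  Real.log (1 + ∑ i, Real.exp (x i))

/-- Inverse of the exponential coordinate map: `pᵢ = e^{θᵢ − ψ(θ)}`. -/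
noncomputable def pMap {n : ℕ} (θ : Fin n → ℝ) : Fin (n + 1) → ℝ :=
  fun i => Real.exp ((Fin.snoc θ (0 : ℝ) : Fin (n + 1) → ℝ) i - psiFun θ)

/-- The continuous linear map `x ↦ Σᵢ vᵢ xᵢ` (pairing with the gradient vector `v`). -/
noncomputable def dotCLM {m : ℕ} (v : Fin m → ℝ) : (Fin m → ℝ) →L[ℝ] ℝ :=
  LinearMap.toContinuousLinearMap
    (∑ i, v i • (LinearMap.proj i : (Fin m → ℝ) →ₗ[ℝ] ℝ))

/-! The proof is the chain rule. The gradient of `ψ` is `(p₁, …, pₙ₋₁)`, so moving `θᵢ` moves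
`p` with velocity `pⱼ(δⱼᵢ − pᵢ)`, and `φ` changes at rate `Σⱼ gⱼ pⱼ(δⱼᵢ − pᵢ)`. Adding `∂ψ/∂θᵢ = pᵢ`
gives `pᵢ(1 + gᵢ − Σⱼ gⱼ pⱼ) = πᵢ`. -/

lemma dotCLM_apply {m : ℕ} (v w : Fin m → ℝ) : dotCLM v w = ∑ i, v i * w i := by
  simp [dotCLM]

lemma one_add_sum_exp_pos {n : ℕ} (θ : Fin n → ℝ) : 0 < 1 + ∑ i, Real.exp (θ i) := by
  positivity

lemma exp_psiFun {n : ℕ} (θ : Fin n → ℝ) : Real.exp (psiFun θ) = 1 + ∑ i, Real.exp (θ i) :=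
  Real.exp_log (one_add_sum_exp_pos θ)

lemma pMap_castSucc {n : ℕ} (θ : Fin n → ℝ) (i : Fin n) :
    pMap θ i.castSucc = Real.exp (θ i) / (1 + ∑ j, Real.exp (θ j)) := by
  rw [pMap, Fin.snoc_castSucc, Real.exp_sub, exp_psiFun]

lemma pMap_last {n : ℕ} (θ : Fin n → ℝ) :
    pMap θ (Fin.last n) = 1 / (1 + ∑ j, Real.exp (θ j)) := by
  rw [pMap, Fin.snoc_last, zero_sub, Real.exp_neg, exp_psiFun, one_div]

lemma pMap_mem_openSimplex {n : ℕ} (θ : Fin n → ℝ) : pMap θ ∈ openSimplex (n + 1) := by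
  refine ⟨fun i => Real.exp_pos _, ?_⟩
  rw [Fin.sum_univ_castSucc]
  simp only [pMap_castSucc, pMap_last]
  rw [← Finset.sum_div, ← add_div, add_comm, div_self (one_add_sum_exp_pos θ).ne']

lemma hasDerivAt_psiFun_comp {n : ℕ} {γ : ℝ → Fin n → ℝ} {v : Fin n → ℝ} {t : ℝ}
    (hγ : HasDerivAt γ v t) :
    HasDerivAt (fun s => psiFun (γ s)) (∑ j, pMap (γ t) j.castSucc * v j) t := by
  have hsum : HasDerivAt (fun s => 1 + ∑ j, Real.exp (γ s j))
      (∑ j, Real.exp (γ t j) * v j) t :=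
    (HasDerivAt.fun_sum fun j _ => (hasDerivAt_pi.1 hγ j).exp).const_add 1
  refine (hsum.log (one_add_sum_exp_pos (γ t)).ne').congr_deriv ?_
  rw [Finset.sum_div]
  simp only [pMap_castSucc, div_mul_eq_mul_div]

lemma hasDerivAt_psiFun_update {n : ℕ} (θ : Fin n → ℝ) (i : Fin n) :
    HasDerivAt (fun s => psiFun (Function.update θ i s)) (pMap θ i.castSucc) (θ i) := by
  have h := hasDerivAt_psiFun_comp (hasDerivAt_update θ i (θ i))
  simpa [Function.update_eq_self, Pi.single_apply] using h

lemma hasDerivAt_pMap_update {n : ℕ} (θ : Fin n → ℝ) (i : Fin n) :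
    HasDerivAt (fun s => pMap (Function.update θ i s))
      (fun j => pMap θ j * ((if j = i.castSucc then (1 : ℝ) else 0) - pMap θ i.castSucc))
      (θ i) := by
  have hsnoc : HasDerivAt (fun s => (Fin.snoc (Function.update θ i s) 0 : Fin (n + 1) → ℝ))
      (Pi.single i.castSucc 1) (θ i) := by
    simpa only [Fin.snoc_update] using hasDerivAt_update (Fin.snoc θ 0) i.castSucc (θ i)
  refine hasDerivAt_pi.2 fun j => ?_
  refine ((hasDerivAt_pi.1 hsnoc j).fun_sub (hasDerivAt_psiFun_update θ i)).exp.congr_deriv ?_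
  rw [Function.update_eq_self, Pi.single_apply]
  rfl

lemma mul_one_add_sum_mul_ite_sub {m : ℕ} (v p : Fin m → ℝ) (k : Fin m) :
    p k * (1 + ∑ j, v j * ((if j = k then (1 : ℝ) else 0) - p j))
      = ∑ j, v j * (p j * ((if j = k then (1 : ℝ) else 0) - p k)) + p k := by
  have hπ : ∑ j, v j * ((if j = k then (1 : ℝ) else 0) - p j) = v k - ∑ j, v j * p j := by
    simp [mul_sub]
  have hdφ : ∑ j, v j * (p j * ((if j = k then (1 : ℝ) else 0) - p k))
      = v k * p k - (∑ j, v j * p j) * p k := by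
    simp [mul_sub, Finset.sum_mul, mul_assoc]
  rw [hπ, hdφ]
  ring

theorem partial_f_eq_portfolio_general (n : ℕ) (φf : (Fin (n + 1) → ℝ) → ℝ)
    (g : (Fin (n + 1) → ℝ) → (Fin (n + 1) → ℝ))
    (hgrad : ∀ p ∈ openSimplex (n + 1),
      HasFDerivWithinAt φf (dotCLM (g p)) (openSimplex (n + 1)) p) :
    ∀ (θ : Fin n → ℝ) (i : Fin n),
      HasDerivAt (fun s : ℝ => φf (pMap (Function.update θ i s))
          + psiFun (Function.update θ i s))
        (pMap θ i.castSucc * (1 + ∑ j, g (pMap θ) j *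
          ((if j = i.castSucc then (1:ℝ) else 0) - pMap θ j)))
        (θ i) := by
  intro θ i
  have hφ := (hgrad _ (pMap_mem_openSimplex θ)).comp_hasDerivAt_of_eq (θ i)
    (hasDerivAt_pMap_update θ i) (.of_forall fun s => pMap_mem_openSimplex _)
    (by rw [Function.update_eq_self])
  rw [dotCLM_apply] at hφ
  rw [mul_one_add_sum_mul_ite_sub]
  exact hφ.add (hasDerivAt_psiFun_update θ i)

/-- For a smooth exponentially concave `φ` with Euclidean gradient `g` and generated
portfolio `πᵢ(p) = pᵢ(1 + g(p)·(e⁽ⁱ⁾ − p))`, the function `f(θ) = φ(θ) + ψ(θ)` in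
exponential coordinates satisfies `∂f/∂θᵢ = πᵢ(θ)` for `i = 1, …, n−1`. -/
theorem partial_f_eq_portfolio (n : ℕ) (φf : (Fin (n + 1) → ℝ) → ℝ)
    (g : (Fin (n + 1) → ℝ) → (Fin (n + 1) → ℝ))
    (hconc : ConcaveOn ℝ (openSimplex (n + 1)) (fun p => Real.exp (φf p)))
    (hgrad : ∀ p ∈ openSimplex (n + 1),
      HasFDerivWithinAt φf (dotCLM (g p)) (openSimplex (n + 1)) p) :
    ∀ (θ : Fin n → ℝ) (i : Fin n),
      HasDerivAt (fun s : ℝ => φf (pMap (Function.update θ i s))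
          + psiFun (Function.update θ i s))
        (pMap θ i.castSucc * (1 + ∑ j, g (pMap θ) j *
          ((if j = i.castSucc then (1:ℝ) else 0) - pMap θ j)))
        (θ i) :=
  partial_f_eq_portfolio_general n φf g hgrad
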